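/- arXiv:2407.19678 — 4 statements merged into one kernel-verified Lean document; each statement's English description precedes it below -/
import Mathlib

section
/- Suppose t₁ ≤ t_o < t₂ are real arrival times and the leader arrives at t₁. Then the follower's utility at the reflected time t₂' = 2t_o - t₂ is at least its utility at t₂: the travel cost is unchanged, the territory reward is unchanged or improved (since t₂' < t₂ means weakly earlier arrival), and |t₁ - t₂'| ≤ |t₁ - t₂|, so the risk term is unchanged or decreased. Consequently no best response of the follower arrives strictly later than t_o. -/
open Real

/-- Follower's territory reward. -/
noncomputable def reward2 (E₁ E₂ t₁ t₂ : ℝ) : ℝ := if t₂ < t₁ then E₁ else E₂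

/-- Predation risk: halved when the arrival times are within one unit. -/
noncomputable def risk2 (r t₁ t₂ : ℝ) : ℝ := if |t₁ - t₂| ≤ 1 then r / 2 else r

/-- Follower's utility. -/
noncomputable def u2 (t_o β₂ E₁ E₂ r t₁ t₂ : ℝ) : ℝ :=
  reward2 E₁ E₂ t₁ t₂ - (t₂ - t_o) ^ 2 / β₂ - risk2 r t₁ t₂

theorem follower_never_after_to (t_o β₂ E₁ E₂ r t₁ t₂ : ℝ)
    (hβ : 0 < β₂) (hr : 0 < r) (hE : E₂ < E₁) (hE2 : 0 < E₂)
    (h1 : t₁ ≤ t_o) (h2 : t_o < t₂) :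
    |t₁ - (2 * t_o - t₂)| ≤ t₂ - t₁ ∧
    u2 t_o β₂ E₁ E₂ r t₁ (2 * t_o - t₂) ≥ u2 t_o β₂ E₁ E₂ r t₁ t₂ := by
  have habs : |t₁ - (2 * t_o - t₂)| ≤ t₂ - t₁ := by
    rw [abs_le]; constructor <;> nlinarith
  refine ⟨habs, ?_⟩
  have hreward : reward2 E₁ E₂ t₁ (2 * t_o - t₂) ≥ reward2 E₁ E₂ t₁ t₂ := by
    unfold reward2
    have : ¬ t₂ < t₁ := by linarith
    simp only [this, if_false]
    split <;> linarith
  have hrisk : risk2 r t₁ (2 * t_o - t₂) ≤ risk2 r t₁ t₂ := by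
    unfold risk2
    have h12 : |t₁ - t₂| = t₂ - t₁ := by rw [abs_sub_comm, abs_of_pos (by linarith)]
    by_cases h : |t₁ - t₂| ≤ 1
    · rw [if_pos h, if_pos (le_trans (habs.trans_eq h12.symm) h)]
    · rw [if_neg h]; split <;> linarith
  have hcost : (2 * t_o - t₂ - t_o) ^ 2 = (t₂ - t_o) ^ 2 := by ring
  unfold u2
  rw [hcost]
  linarith
end

section
/- In the 2-agent discrete-time flock formation game with leader arrival t₁ = t_o - k₁ for an integer k₁ ≥ 1, every integer follower arrival t₂ ≤ t_o is weakly dominated by one of the three times t₁ - 1, t₁ + 1, t_o. Specifically: (i) if t₂ < t₁ - 1 then u₂(t₁, t₂) < u₂(t₁, t₁ - 1); (ii) if t₂ = t₁ then u₂(t₁, t₂) ≤ u₂(t₁, t₁ + 1); (iii) if t₁ + 1 < t₂ < t_o then u₂(t₁, t₂) < u₂(t₁, t_o). -/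
open Real

theorem discrete_follower_three_choices (t_o β₂ E₁ E₂ r : ℝ) (k₁ : ℤ)
    (hβ : 0 < β₂) (hr : 0 < r) (hE : E₂ < E₁) (hE2 : 0 < E₂) (hk₁ : 1 ≤ k₁) :
    ∀ k₂ : ℤ, 0 ≤ k₂ →
      (let t₁ : ℝ := t_o - (k₁ : ℝ)
       let t₂ : ℝ := t_o - (k₂ : ℝ)
       (t₂ < t₁ - 1 → u2 t_o β₂ E₁ E₂ r t₁ t₂ < u2 t_o β₂ E₁ E₂ r t₁ (t₁ - 1)) ∧
       (t₂ = t₁ → u2 t_o β₂ E₁ E₂ r t₁ t₂ ≤ u2 t_o β₂ E₁ E₂ r t₁ (t₁ + 1)) ∧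
       (t₁ + 1 < t₂ → t₂ < t_o →
         u2 t_o β₂ E₁ E₂ r t₁ t₂ < u2 t_o β₂ E₁ E₂ r t₁ t_o)) := by
  intro k₂ hk₂
  have hk1 : (1:ℝ) ≤ (k₁:ℝ) := by exact_mod_cast hk₁
  have hk2 : (0:ℝ) ≤ (k₂:ℝ) := by exact_mod_cast hk₂
  refine ⟨?_, ?_, ?_⟩
  · intro h
    have hk : (k₁:ℝ) + 1 < k₂ := by linarith
    unfold u2 reward2 risk2
    rw [if_pos (by linarith : t_o - (k₂:ℝ) < t_o - (k₁:ℝ)),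
        if_pos (by linarith : t_o - (k₁:ℝ) - 1 < t_o - (k₁:ℝ)),
        if_neg (by rw [abs_le]; push_neg; intro _; linarith),
        if_pos (by rw [show t_o - (k₁:ℝ) - (t_o - (k₁:ℝ) - 1) = 1 by ring]; norm_num)]
    have hsq : ((k₁:ℝ)+1)^2 < (k₂:ℝ)^2 := by nlinarith
    have hdiv : ((k₁:ℝ)+1)^2 / β₂ < (k₂:ℝ)^2 / β₂ := by gcongr
    have e1 : (t_o - (k₂:ℝ) - t_o)^2 = (k₂:ℝ)^2 := by ring
    have e2 : (t_o - (k₁:ℝ) - 1 - t_o)^2 = ((k₁:ℝ)+1)^2 := by ring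
    rw [e1, e2]; linarith
  · intro h
    rw [h]
    unfold u2 reward2 risk2
    rw [if_neg (lt_irrefl _),
        if_neg (by push_neg; linarith : ¬ (t_o - (k₁:ℝ) + 1 < t_o - (k₁:ℝ))),
        if_pos (by rw [show t_o - (k₁:ℝ) - (t_o - (k₁:ℝ)) = 0 by ring]; norm_num),
        if_pos (by rw [show t_o - (k₁:ℝ) - (t_o - (k₁:ℝ) + 1) = -1 by ring]; rw [abs_le]; norm_num)]
    have e1 : (t_o - (k₁:ℝ) - t_o)^2 = (k₁:ℝ)^2 := by ring
    have e2 : (t_o - (k₁:ℝ) + 1 - t_o)^2 = ((k₁:ℝ)-1)^2 := by ring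
    rw [e1, e2]
    have hsq : ((k₁:ℝ)-1)^2 ≤ (k₁:ℝ)^2 := by nlinarith
    have hdiv : ((k₁:ℝ)-1)^2 / β₂ ≤ (k₁:ℝ)^2 / β₂ := by gcongr
    linarith
  · intro h1 h2
    have hk : (k₂:ℝ) < (k₁:ℝ) - 1 := by linarith
    have hk0 : (0:ℝ) < (k₂:ℝ) := by
      have : (0:ℤ) < k₂ := by
        by_contra hc
        push_neg at hc
        have hz : k₂ = 0 := le_antisymm hc hk₂
        rw [hz] at h2; push_cast at h2; linarith
      exact_mod_cast this
    unfold u2 reward2 risk2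
    rw [if_neg (by push_neg; linarith : ¬ (t_o - (k₂:ℝ) < t_o - (k₁:ℝ))),
        if_neg (by push_neg; linarith : ¬ (t_o < t_o - (k₁:ℝ))),
        if_neg (by rw [abs_le]; push_neg; intro hle; exfalso
                   rw [show t_o - (k₁:ℝ) - (t_o - (k₂:ℝ)) = (k₂:ℝ) - k₁ by ring] at hle
                   linarith)]
    have e1 : (t_o - (k₂:ℝ) - t_o)^2 = (k₂:ℝ)^2 := by ring
    rw [e1, show (t_o - t_o)^2 = 0 by ring, zero_div]
    have hsq : (0:ℝ) < (k₂:ℝ)^2 := by positivity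
    have hdiv : (0:ℝ) < (k₂:ℝ)^2 / β₂ := by positivity
    by_cases hc : |t_o - (k₁:ℝ) - t_o| ≤ 1
    · rw [if_pos hc]; linarith
    · rw [if_neg hc]; linarith
end

section
/- Let β₂ > 0, r > 0, Δ > 4/β₂ and k* = ⌈min(√((Δ + r/2)β₂), Δβ₂/4 + 1)⌉ - 1. Then k* ≥ 2, and k* is the largest integer k such that E₁ - k²/β₂ - r/2 > max(E₂ - (k-2)²/β₂ - r/2, E₂ - r) where Δ = E₁ - E₂; equivalently, against leader arrival t_o - k* + 1 the follower strictly prefers preempting at t_o - k*, while against leader arrival t_o - k* preempting at t_o - k* - 1 is weakly dominated by t_o - k* + 1 or t_o. -/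
open Real

theorem kstar_characterization (β₂ E₁ E₂ r Δ : ℝ)
    (hβ : 0 < β₂) (hr : 0 < r) (hE2 : 0 < E₂)
    (hΔ : Δ = E₁ - E₂) (hbig : Δ > 4 / β₂) :
    let kstar : ℤ := ⌈min (Real.sqrt ((Δ + r / 2) * β₂)) (Δ * β₂ / 4 + 1)⌉ - 1
    let P : ℤ → Prop := fun k =>
      E₁ - (k : ℝ) ^ 2 / β₂ - r / 2 >
        max (E₂ - ((k : ℝ) - 2) ^ 2 / β₂ - r / 2) (E₂ - r)
    2 ≤ kstar ∧ P kstar ∧ ∀ k : ℤ, P k → k ≤ kstar := by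
  intro kstar P
  set m : ℝ := min (Real.sqrt ((Δ + r / 2) * β₂)) (Δ * β₂ / 4 + 1) with hm_def
  have hβi : 0 < β₂⁻¹ := inv_pos.mpr hβ
  have hcancel : β₂ * β₂⁻¹ = 1 := mul_inv_cancel₀ (ne_of_gt hβ)
  have hΔβ : 4 < Δ * β₂ := by
    have := (div_lt_iff₀ hβ).mp hbig
    linarith
  have hB : 4 < (Δ + r / 2) * β₂ := by nlinarith
  have hsq : (2:ℝ) < Real.sqrt ((Δ + r / 2) * β₂) :=
    (Real.lt_sqrt (by norm_num)).mpr (by nlinarith)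
  have hm2 : (2:ℝ) < m := lt_min hsq (by linarith)
  have hks2 : 2 ≤ kstar := by
    have h3 : (2:ℤ) < ⌈m⌉ := Int.lt_ceil.mpr (by exact_mod_cast hm2)
    simp only [kstar]
    rw [← hm_def]
    omega
  -- key equivalence
  have hPiff : ∀ k : ℤ, P k ↔
      ((k:ℝ) < Δ * β₂ / 4 + 1 ∧ (k:ℝ)^2 < (Δ + r/2) * β₂) := by
    intro k
    simp only [P, gt_iff_lt, max_lt_iff]
    rw [div_eq_mul_inv ((k:ℝ)^2), div_eq_mul_inv (((k:ℝ)-2)^2)]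
    constructor
    · rintro ⟨h1, h2⟩
      constructor
      · have key : (4*(k:ℝ) - 4) * β₂⁻¹ < Δ := by nlinarith
        nlinarith [mul_lt_mul_of_pos_right key hβ]
      · have key : (k:ℝ)^2 * β₂⁻¹ < Δ + r/2 := by nlinarith
        nlinarith [mul_lt_mul_of_pos_right key hβ]
    · rintro ⟨h1, h2⟩
      have h1' : (4*(k:ℝ) - 4) < Δ * β₂ := by nlinarith
      constructor
      · nlinarith [mul_lt_mul_of_pos_right h1' hβi]
      · nlinarith [mul_lt_mul_of_pos_right h2 hβi]
  have hkslt : ((kstar:ℤ):ℝ) < m := by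
    have := Int.ceil_lt_add_one m
    simp only [kstar]
    rw [← hm_def]
    push_cast
    linarith
  have hks0 : (0:ℝ) ≤ ((kstar:ℤ):ℝ) := by exact_mod_cast le_trans (by norm_num) hks2
  refine ⟨hks2, ?_, ?_⟩
  · rw [hPiff]
    constructor
    · exact lt_of_lt_of_le hkslt (min_le_right _ _)
    · exact (Real.lt_sqrt hks0).mp (lt_of_lt_of_le hkslt (min_le_left _ _))
  · intro k hk
    rw [hPiff] at hk
    obtain ⟨h1, h2⟩ := hk
    by_cases hk0 : k ≤ 0
    · omega
    · have hk0' : (0:ℝ) ≤ (k:ℝ) := by exact_mod_cast le_of_lt (by omega : 0 < k)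
      have hlt : (k:ℝ) < m := lt_min ((Real.lt_sqrt hk0').mpr h2) h1
      have : k < ⌈m⌉ := Int.lt_ceil.mpr hlt
      simp only [kstar]
      rw [← hm_def]
      omega
end

section
/- Let β₂ > 0, r > 0, E₁ > E₂ > 0 with (E₁ - E₂)β₂ > √(2rβ₂) + 1. Then √(β₂(E₁ - E₂ + r/2)) > 1 and moreover t_o - t₁ = √(β₂(E₁ - E₂ + r/2)) satisfies t_o - t₁ ≥ √(rβ₂/2) + 1, so in the Type-2 SPE profile (t_o - √(β₂(E₁-E₂+r/2)), t_o) the two agents are more than one unit apart and do not form a flock. -/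
open Real

theorem type2_no_flock (β₂ E₁ E₂ r : ℝ)
    (hβ : 0 < β₂) (hr : 0 < r) (hE : E₂ < E₁) (hE2 : 0 < E₂)
    (h : (E₁ - E₂) * β₂ > Real.sqrt (2 * r * β₂) + 1) :
    Real.sqrt (β₂ * (E₁ - E₂ + r / 2)) > 1 ∧
    Real.sqrt (β₂ * (E₁ - E₂ + r / 2)) ≥ Real.sqrt (r * β₂ / 2) + 1 := by
  set a := Real.sqrt (r * β₂ / 2) with ha_def
  have ha0 : 0 < a := Real.sqrt_pos.mpr (by positivity)
  have ha2 : a ^ 2 = r * β₂ / 2 := Real.sq_sqrt (by positivity)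
  have h4 : Real.sqrt (2 * r * β₂) = 2 * a := by
    rw [ha_def, show 2 * r * β₂ = 2 ^ 2 * (r * β₂ / 2) by ring,
      Real.sqrt_mul (by positivity), Real.sqrt_sq (by norm_num : (0:ℝ) ≤ 2)]
  rw [h4] at h
  have hx : 0 ≤ β₂ * (E₁ - E₂ + r / 2) := by nlinarith
  have hs0 : 0 ≤ Real.sqrt (β₂ * (E₁ - E₂ + r / 2)) := Real.sqrt_nonneg _
  have hs2 : Real.sqrt (β₂ * (E₁ - E₂ + r / 2)) ^ 2 = β₂ * (E₁ - E₂ + r / 2) :=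
    Real.sq_sqrt hx
  have key : Real.sqrt (β₂ * (E₁ - E₂ + r / 2)) ≥ a + 1 := by nlinarith
  constructor
  · linarith
  · exact key
end
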